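/- Let F, F₁, F₂ be distribution functions on ℝ with characteristic functions f, f₁, f₂, and suppose F₁ = F ∗ F₂. Suppose f₁ and f₂ are nonvanishing and admit Lévy–Khinchine representations with pairs (γ₁, G₁) and (γ₂, G₂) respectively, where G₁, G₂ are nonnegative finite Borel measures. Then f(t) ≠ 0 for every t ∈ ℝ, f(t) = f₁(t)/f₂(t) for all t, and f admits the Lévy–Khinchine representation with pair (γ₁ − γ₂, G₁ − G₂), where G₁ − G₂ is a finite signed Borel measure. -/

import Mathlib

open MeasureTheory Complex Filter Finset

/-- Characteristic function of a Borel measure on ℝ. -/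
noncomputable def charFun (μ : MeasureTheory.Measure ℝ) (t : ℝ) : ℂ :=
  ∫ x, Complex.exp (Complex.I * t * x) ∂μ

/-- `g` is the distinguished logarithm of `f`: continuous, `g 0 = 0`, `exp ∘ g = f`. -/
def IsDistinguishedLog (g f : ℝ → ℂ) : Prop :=
  Continuous g ∧ g 0 = 0 ∧ ∀ t : ℝ, Complex.exp (g t) = f t

/-- Integral of a complex function against a finite signed measure, via the
Jordan decomposition. -/
noncomputable def sInt (G : MeasureTheory.SignedMeasure ℝ) (φ : ℝ → ℂ) : ℂ :=
  (∫ x, φ x ∂G.toJordanDecomposition.posPart) -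
    (∫ x, φ x ∂G.toJordanDecomposition.negPart)

/-- The Lévy–Khinchine integrand `K(t,x) = (e^{itx} - 1 - it sin x)(1+x²)/x²`,
with value `-t²/2` at `x = 0`. -/
noncomputable def Kfun (t x : ℝ) : ℂ :=
  if x = 0 then -(t ^ 2) / 2
  else (Complex.exp (Complex.I * t * x) - 1 - Complex.I * t * Real.sin x) * (1 + x ^ 2) / x ^ 2

/-- The kernel `C(h,x) = (cos(hx) - 1)(1+x²)/x²`, with value `-h²/2` at `x = 0`. -/
noncomputable def Cfun (h x : ℝ) : ℂ :=
  if x = 0 then -(h ^ 2) / 2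
  else ((Real.cos (h * x) - 1) * (1 + x ^ 2) / x ^ 2 : ℝ)

/-- `g` (the distinguished logarithm of `f`) is represented by the Lévy–Khinchine
formula with spectral pair `(γ, G)`. -/
def HasLK (g : ℝ → ℂ) (γ : ℝ) (G : MeasureTheory.SignedMeasure ℝ) : Prop :=
  ∀ t : ℝ, g t = Complex.I * t * γ + sInt G (Kfun t)

/-- Symmetric second finite difference of `g` with step `h`. -/
def delta2 (g : ℝ → ℂ) (h t : ℝ) : ℂ := g (t - h) + g (t + h) - 2 * g t

/-- `n`-fold convolution power of a measure on ℝ. -/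
noncomputable def convPow (ν : MeasureTheory.Measure ℝ) : ℕ → MeasureTheory.Measure ℝ
  | 0 => MeasureTheory.Measure.dirac 0
  | n + 1 => (convPow ν n).conv ν

/-- A probability measure `μ` on ℝ is infinitely divisible. -/
def IsInfDiv (μ : MeasureTheory.Measure ℝ) : Prop :=
  ∀ n : ℕ, 0 < n → ∃ ν : MeasureTheory.Measure ℝ,
    MeasureTheory.IsProbabilityMeasure ν ∧ convPow ν n = μ

/-- A probability measure `μ` on ℝ is rationally infinitely divisible:
`μ₁ = μ ∗ μ₂` for some infinitely divisible probability measures `μ₁, μ₂`. -/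
def IsRatInfDiv (μ : MeasureTheory.Measure ℝ) : Prop :=
  ∃ μ₁ μ₂ : MeasureTheory.Measure ℝ,
    MeasureTheory.IsProbabilityMeasure μ₁ ∧ MeasureTheory.IsProbabilityMeasure μ₂ ∧
    IsInfDiv μ₁ ∧ IsInfDiv μ₂ ∧ μ₁ = μ.conv μ₂

/-! The quotient `f = f₁ / f₂` is forced by `f₁ = f f₂`, as `f₂ = exp g₂` never vanishes, and
`g₁ - g₂` is a distinguished logarithm of it. The Lévy–Khinchine formulas subtract termwise
because the integral against a signed measure depends only on the measure and not on the way it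
is split into a difference of finite measures, and the kernel `K(t, ·)` is bounded and
measurable, hence integrable against every finite measure. -/

lemma charFun_eq_charFun (μ : Measure ℝ) : _root_.charFun μ = MeasureTheory.charFun μ := by
  ext t
  simp only [_root_.charFun, charFun_apply_real]
  congr with x
  ring_nf

lemma charFun_conv (μ ν : Measure ℝ) [IsFiniteMeasure μ] [IsFiniteMeasure ν] :
    _root_.charFun (μ ∗ ν) = _root_.charFun μ * _root_.charFun ν := by
  ext t
  simp only [charFun_eq_charFun, Pi.mul_apply, MeasureTheory.charFun_conv]

lemma IsDistinguishedLog.ne_zero {g f : ℝ → ℂ} (h : IsDistinguishedLog g f) (t : ℝ) :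
    f t ≠ 0 :=
  h.2.2 t ▸ Complex.exp_ne_zero _

lemma IsDistinguishedLog.sub {g₁ g₂ f₁ f₂ : ℝ → ℂ} (h₁ : IsDistinguishedLog g₁ f₁)
    (h₂ : IsDistinguishedLog g₂ f₂) : IsDistinguishedLog (g₁ - g₂) (f₁ / f₂) :=
  ⟨h₁.1.sub h₂.1, by simp [h₁.2.1, h₂.2.1], fun t => by simp [Complex.exp_sub, h₁.2.2, h₂.2.2]⟩

lemma sInt_eq_integral_sub_integral {G : SignedMeasure ℝ} {φ : ℝ → ℂ} (P N : Measure ℝ)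
    [IsFiniteMeasure P] [IsFiniteMeasure N]
    (hφ : ∀ (ν : Measure ℝ) [IsFiniteMeasure ν], Integrable φ ν)
    (hG : G = P.toSignedMeasure - N.toSignedMeasure) :
    sInt G φ = (∫ x, φ x ∂P) - ∫ x, φ x ∂N := by
  set P' := G.toJordanDecomposition.posPart
  set N' := G.toJordanDecomposition.negPart
  have hsplit : P' + N = P + N' := by
    rw [← Measure.toSignedMeasure_eq_toSignedMeasure_iff, Measure.toSignedMeasure_add,
      Measure.toSignedMeasure_add]
    have hJ : P'.toSignedMeasure - N'.toSignedMeasure = G :=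
      G.toSignedMeasure_toJordanDecomposition
    rw [← sub_eq_sub_iff_add_eq_add, hJ, hG]
  have hint := congrArg (fun ν => ∫ x, φ x ∂ν) hsplit
  simp only [integral_add_measure (hφ _) (hφ _)] at hint
  unfold sInt
  linear_combination hint

lemma sInt_sub {φ : ℝ → ℂ} (hφ : ∀ (ν : Measure ℝ) [IsFiniteMeasure ν], Integrable φ ν)
    (G₁ G₂ : SignedMeasure ℝ) : sInt (G₁ - G₂) φ = sInt G₁ φ - sInt G₂ φ := by
  set j₁ := G₁.toJordanDecomposition
  set j₂ := G₂.toJordanDecomposition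
  have hG : G₁ - G₂ = (j₁.posPart + j₂.negPart).toSignedMeasure -
      (j₁.negPart + j₂.posPart).toSignedMeasure := by
    rw [Measure.toSignedMeasure_add, Measure.toSignedMeasure_add,
      ← G₁.toSignedMeasure_toJordanDecomposition, ← G₂.toSignedMeasure_toJordanDecomposition]
    simp only [JordanDecomposition.toSignedMeasure]
    abel
  rw [sInt_eq_integral_sub_integral _ _ hφ hG, sInt, sInt, integral_add_measure (hφ _) (hφ _),
    integral_add_measure (hφ _) (hφ _)]
  ring

lemma norm_exp_I_mul_sub_one_sub_le (θ : ℝ) :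
    ‖Complex.exp (I * θ) - 1 - I * θ‖ ≤ 2 * θ ^ 2 := by
  rcases le_or_gt |θ| 1 with hθ | hθ
  · have hIθ : ‖I * (θ : ℂ)‖ = |θ| := by simp
    calc ‖Complex.exp (I * θ) - 1 - I * θ‖ ≤ ‖I * (θ : ℂ)‖ ^ 2 :=
          Complex.norm_exp_sub_one_sub_id_le (hIθ ▸ hθ)
      _ ≤ 2 * θ ^ 2 := by rw [hIθ, sq_abs]; nlinarith [sq_nonneg θ]
  · calc ‖Complex.exp (I * θ) - 1 - I * θ‖ ≤ ‖Complex.exp (I * θ) - 1‖ + ‖I * (θ : ℂ)‖ :=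
          norm_sub_le _ _
      _ ≤ |θ| + |θ| := by
          gcongr
          · exact Real.norm_eq_abs θ ▸ Real.norm_exp_I_mul_ofReal_sub_one_le
          · simp
      _ ≤ 2 * θ ^ 2 := by nlinarith [sq_abs θ]

lemma norm_mul_one_add_sq_div_sq_le {u : ℂ} {x a b : ℝ} (hx : x ≠ 0) (ha : ‖u‖ ≤ a)
    (hb : |x| ≤ 1 → ‖u‖ ≤ b * x ^ 2) : ‖u * (1 + x ^ 2) / x ^ 2‖ ≤ 2 * max a b := by
  have hx2 : 0 < x ^ 2 := by positivity
  have hnorm : ‖u * (1 + x ^ 2) / x ^ 2‖ = ‖u‖ * (1 + x ^ 2) / x ^ 2 := by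
    rw [mul_div_assoc,
      show (1 + (x : ℂ) ^ 2) / (x : ℂ) ^ 2 = ((1 + x ^ 2) / x ^ 2 : ℝ) by push_cast; rfl,
      norm_mul, Complex.norm_real, Real.norm_of_nonneg (by positivity), mul_div_assoc]
  rw [hnorm, div_le_iff₀ hx2]
  rcases le_or_gt |x| 1 with hx1 | hx1
  · have hsq : x ^ 2 ≤ 1 := by nlinarith [sq_abs x, abs_nonneg x]
    nlinarith [hb hx1, le_max_right a b, norm_nonneg u]
  · have hsq : 1 < x ^ 2 := by nlinarith [sq_abs x]
    nlinarith [le_max_left a b, norm_nonneg u]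

lemma norm_Kfun_le (t x : ℝ) : ‖Kfun t x‖ ≤ 2 * max (2 + |t|) (2 * t ^ 2 + |t|) := by
  rcases eq_or_ne x 0 with rfl | hx
  · have hmax := le_max_right (2 + |t|) (2 * t ^ 2 + |t|)
    simp only [Kfun, if_true, norm_div, norm_neg, norm_pow, Complex.norm_real,
      Real.norm_eq_abs, sq_abs, Complex.norm_ofNat]
    nlinarith [sq_nonneg t, abs_nonneg t]
  rw [Kfun, if_neg hx]
  refine norm_mul_one_add_sq_div_sq_le hx ?_ fun hx1 => ?_
  · calc _ ≤ ‖Complex.exp (I * t * x) - 1‖ + ‖I * t * (Real.sin x : ℂ)‖ := norm_sub_le _ _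
      _ ≤ (‖Complex.exp (I * t * x)‖ + 1) + |t| * 1 := by
          gcongr
          · simpa using norm_sub_le (Complex.exp (I * t * x)) 1
          · simp only [norm_mul, Complex.norm_I, one_mul, Complex.norm_real, Real.norm_eq_abs]
            gcongr
            exact Real.abs_sin_le_one x
      _ = 2 + |t| := by
          rw [show I * t * x = I * ((t * x : ℝ) : ℂ) by push_cast; ring,
            Complex.norm_exp_I_mul_ofReal]
          ring
  · have hsin : |x - Real.sin x| ≤ x ^ 2 := by
      have := Real.abs_sub_sin_le x
      nlinarith [sq_abs x, abs_nonneg x, pow_le_pow_left₀ (abs_nonneg x) hx1 2]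
    calc _ = ‖(Complex.exp (I * ((t * x : ℝ) : ℂ)) - 1 - I * ((t * x : ℝ) : ℂ))
          + I * t * ((x - Real.sin x : ℝ) : ℂ)‖ := by push_cast; ring_nf
      _ ≤ 2 * (t * x) ^ 2 + |t| * x ^ 2 := by
          refine (norm_add_le _ _).trans (add_le_add (norm_exp_I_mul_sub_one_sub_le _) ?_)
          simp only [norm_mul, Complex.norm_I, one_mul, Complex.norm_real, Real.norm_eq_abs]
          gcongr
      _ = (2 * t ^ 2 + |t|) * x ^ 2 := by ring

lemma integrable_Kfun (t : ℝ) (ν : Measure ℝ) [IsFiniteMeasure ν] : Integrable (Kfun t) ν := by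
  have hmeas : Measurable (Kfun t) :=
    Measurable.ite (measurableSet_singleton 0) measurable_const (by fun_prop)
  exact (integrable_const _).mono' hmeas.aestronglyMeasurable (ae_of_all _ (norm_Kfun_le t))

lemma HasLK.sub {g₁ g₂ : ℝ → ℂ} {γ₁ γ₂ : ℝ} {G₁ G₂ : SignedMeasure ℝ} (h₁ : HasLK g₁ γ₁ G₁)
    (h₂ : HasLK g₂ γ₂ G₂) : HasLK (g₁ - g₂) (γ₁ - γ₂) (G₁ - G₂) := fun t => by
  rw [Pi.sub_apply, h₁ t, h₂ t, sInt_sub (integrable_Kfun t)]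
  push_cast
  ring

theorem hasLK_of_conv_quotient_general (μ μ₁ μ₂ : MeasureTheory.Measure ℝ)
    [MeasureTheory.IsProbabilityMeasure μ]
    [MeasureTheory.IsProbabilityMeasure μ₂]
    (hconv : μ₁ = μ.conv μ₂)
    (g₁ g₂ : ℝ → ℂ)
    (hg₁ : IsDistinguishedLog g₁ (_root_.charFun μ₁)) (hg₂ : IsDistinguishedLog g₂ (_root_.charFun μ₂))
    (γ₁ γ₂ : ℝ) (G₁ G₂ : MeasureTheory.SignedMeasure ℝ)
    (hLK₁ : HasLK g₁ γ₁ G₁) (hLK₂ : HasLK g₂ γ₂ G₂) :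
    (∀ t : ℝ, _root_.charFun μ t ≠ 0) ∧
    (∀ t : ℝ, _root_.charFun μ t = _root_.charFun μ₁ t / _root_.charFun μ₂ t) ∧
    (∃ g : ℝ → ℂ, IsDistinguishedLog g (_root_.charFun μ) ∧ HasLK g (γ₁ - γ₂) (G₁ - G₂)) := by
  have hquot : _root_.charFun μ = _root_.charFun μ₁ / _root_.charFun μ₂ := by
    ext t
    rw [hconv, charFun_conv, Pi.div_apply, Pi.mul_apply, mul_div_cancel_right₀ _ (hg₂.ne_zero t)]
  have hlog : IsDistinguishedLog (g₁ - g₂) (_root_.charFun μ) := hquot ▸ hg₁.sub hg₂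
  exact ⟨hlog.ne_zero, fun t => by rw [hquot, Pi.div_apply], g₁ - g₂, hlog, hLK₁.sub hLK₂⟩

/-- if `μ₁ = μ ∗ μ₂` and `f₁, f₂` are nonvanishing with Lévy–Khinchine
representations `(γ₁, G₁)`, `(γ₂, G₂)` (with `G₁, G₂` nonnegative), then `f` is
nonvanishing, `f = f₁ / f₂`, and `f` admits the Lévy–Khinchine representation with
pair `(γ₁ - γ₂, G₁ - G₂)`. -/
theorem hasLK_of_conv_quotient (μ μ₁ μ₂ : MeasureTheory.Measure ℝ)
    [MeasureTheory.IsProbabilityMeasure μ] [MeasureTheory.IsProbabilityMeasure μ₁]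
    [MeasureTheory.IsProbabilityMeasure μ₂]
    (hconv : μ₁ = μ.conv μ₂)
    (hf₁ : ∀ t : ℝ, _root_.charFun μ₁ t ≠ 0) (hf₂ : ∀ t : ℝ, _root_.charFun μ₂ t ≠ 0)
    (g₁ g₂ : ℝ → ℂ)
    (hg₁ : IsDistinguishedLog g₁ (_root_.charFun μ₁)) (hg₂ : IsDistinguishedLog g₂ (_root_.charFun μ₂))
    (γ₁ γ₂ : ℝ) (G₁ G₂ : MeasureTheory.SignedMeasure ℝ)
    (hG₁pos : 0 ≤ G₁) (hG₂pos : 0 ≤ G₂)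
    (hLK₁ : HasLK g₁ γ₁ G₁) (hLK₂ : HasLK g₂ γ₂ G₂) :
    (∀ t : ℝ, _root_.charFun μ t ≠ 0) ∧
    (∀ t : ℝ, _root_.charFun μ t = _root_.charFun μ₁ t / _root_.charFun μ₂ t) ∧
    (∃ g : ℝ → ℂ, IsDistinguishedLog g (_root_.charFun μ) ∧ HasLK g (γ₁ - γ₂) (G₁ - G₂)) :=
  hasLK_of_conv_quotient_general μ μ₁ μ₂ hconv g₁ g₂ hg₁ hg₂ γ₁ γ₂ G₁ G₂ hLK₁ hLK₂
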